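/- Fix a period d > 0, an offset d₀ ∈ (0, d), and k ∈ (0, 2π/d). There exist δ > 0 and C > 0 such that for every κ ∈ ℝ with |κ| ≤ δ (so that (κ, k) ∈ D₁): the symmetric partial sums −(i/d)·Σ_{n=−N}^{N} e^{+i κ_n d₀}/ζ_n and −(i/d)·Σ_{n=−N}^{N} e^{−i κ_n d₀}/ζ_n converge as N → ∞ to limits b⁺(κ) and b⁻(κ) respectively, and |b⁺(κ) − b⁻(κ)| ≤ C·|κ|. -/

import Mathlib

open Real Filter Topology

/-- `κ_n = κ + 2πn/d`. -/
noncomputable def kapN (d κ : ℝ) (n : ℤ) : ℝ := κ + 2 * π * n / d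

/-- `ζ₀ = √(k² − κ²)` and `ζ_n = i√(κ_n² − k²)` for `n ≠ 0`. -/
noncomputable def zetaN (d k κ : ℝ) (n : ℤ) : ℂ :=
  if n = 0 then ((Real.sqrt (k ^ 2 - κ ^ 2) : ℝ) : ℂ)
  else Complex.I * ((Real.sqrt ((kapN d κ n) ^ 2 - k ^ 2) : ℝ) : ℂ)

/-- The diamond region `D₁ = {(κ,k) : |κ| < π/d, 0 < k < |κ + 2πn/d| ∀ n ≠ 0}`. -/
def D1 (d : ℝ) : Set (ℝ × ℝ) :=
  {p : ℝ × ℝ | |p.1| < π / d ∧ 0 < p.2 ∧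
    ∀ n : ℤ, n ≠ 0 → p.2 < |p.1 + 2 * π * n / d|}

/-- `β_e(k, κ, ε) = (1/π) log(2πε/d) + Σ_{n≠0} (1/(2π|n|) − i/(d ζ_n)) − i/(d ζ₀)`. -/
noncomputable def betaE (d k κ ε : ℝ) : ℂ :=
  ((1 / π * Real.log (2 * π * ε / d) : ℝ) : ℂ)
    + (∑' n : {n : ℤ // n ≠ 0},
        (((1 / (2 * π * |(n.1 : ℝ)|) : ℝ) : ℂ) - Complex.I / ((d : ℂ) * zetaN d k κ n.1)))
    - Complex.I / ((d : ℂ) * zetaN d k κ 0)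

/-!
Pairing the terms `n` and `-n`, the symmetric partial sums of `Σ e^{iκ_n d₀}/ζ_n` equal
`e^{iκd₀} (1/ζ₀ - i Σ_{m ≤ N} (w^m / |ζ_m(κ)| + w^{-m} / |ζ_m(-κ)|))` with `w = e^{2πi d₀/d} ≠ 1`.
For `|κ|` small, `m ↦ 1/|ζ_m(±κ)|` decreases to `0`, so the paired series converges by Dirichlet's
test, and `κ ↦ 1/|ζ_m(κ)|` is Lipschitz with constant `O(1/m²)`, so its sum `P(κ)` is Lipschitz
in `κ`. Reflecting `n ↦ -n` shows `b⁻(κ) = b⁺(-κ)`; as `1/ζ₀` is even in `κ`,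
`b⁺(κ) - b⁺(-κ)` is `O(κ)` because `e^{iκd₀}` and `P` are.
-/

open Finset Complex

theorem Finset.sum_Icc_neg_eq_add_sum_range {M : Type*} [AddCommMonoid M] (f : ℤ → M) (N : ℕ) :
    ∑ n ∈ Icc (-(N : ℤ)) N, f n = f 0 + ∑ m ∈ range N, (f (m + 1) + f (-(m + 1))) := by
  induction N with
  | zero => simp
  | succ N ih =>
    have hIcc : Icc (-(N + 1 : ℤ)) (N + 1)
        = insert (-(N + 1 : ℤ)) (insert (N + 1 : ℤ) (Icc (-(N : ℤ)) N)) := by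
      ext; simp only [mem_Icc, mem_insert]; omega
    rw [Nat.cast_succ, hIcc, sum_insert (by simp only [mem_Icc, mem_insert]; omega),
      sum_insert (by simp only [mem_Icc]; omega), ih, sum_range_succ]
    abel

theorem Finset.sum_Icc_comp_neg {M : Type*} [AddCommMonoid M] (f : ℤ → M) (N : ℕ) :
    ∑ n ∈ Icc (-(N : ℤ)) N, f (-n) = ∑ n ∈ Icc (-(N : ℤ)) N, f n := by
  simp only [sum_Icc_neg_eq_add_sum_range, neg_zero, neg_neg, add_comm (f (-(_ + 1)))]

theorem norm_sum_range_pow_succ_le {𝕜 : Type*} [NormedField 𝕜] {v : 𝕜} (hv : ‖v‖ = 1)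
    (hv1 : v ≠ 1) (n : ℕ) : ‖∑ i ∈ range n, v ^ (i + 1)‖ ≤ 2 / ‖v - 1‖ := by
  have hgeom : ∑ i ∈ range n, v ^ (i + 1) = v * ((v ^ n - 1) / (v - 1)) := by
    rw [← geom_sum_eq hv1, mul_sum]
    simp only [pow_succ']
  rw [hgeom, norm_mul, norm_div, hv, one_mul]
  gcongr
  calc ‖v ^ n - 1‖ ≤ ‖v ^ n‖ + ‖(1 : 𝕜)‖ := norm_sub_le _ _
    _ = 2 := by rw [norm_pow, hv, one_pow, norm_one]; norm_num

theorem exists_tendsto_sum_pow_succ_mul {v : ℂ} (hv : ‖v‖ = 1) (hv1 : v ≠ 1) {b : ℕ → ℝ}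
    (hb : Antitone b) (hb0 : Tendsto b atTop (𝓝 0)) :
    ∃ L, Tendsto (fun N ↦ ∑ m ∈ range N, v ^ (m + 1) * b m) atTop (𝓝 L) := by
  have hcauchy := hb.cauchySeq_series_mul_of_tendsto_zero_of_bounded hb0
    (norm_sum_range_pow_succ_le hv hv1)
  obtain ⟨L, hL⟩ := cauchySeq_tendsto_of_complete hcauchy
  exact ⟨L, by simpa only [real_smul, mul_comm] using hL⟩

theorem norm_sub_le_tsum_of_tendsto_sum {E : Type*} [SeminormedAddCommGroup E] {f g : ℕ → E}
    {h : ℕ → ℝ} {a b : E} (hf : Tendsto (fun N ↦ ∑ i ∈ range N, f i) atTop (𝓝 a))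
    (hg : Tendsto (fun N ↦ ∑ i ∈ range N, g i) atTop (𝓝 b)) (hfg : ∀ i, ‖f i - g i‖ ≤ h i)
    (hh : Summable h) : ‖a - b‖ ≤ ∑' i, h i := by
  refine le_of_tendsto (hf.sub hg).norm (Eventually.of_forall fun N ↦ ?_)
  rw [← sum_sub_distrib]
  calc ‖∑ i ∈ range N, (f i - g i)‖ ≤ ∑ i ∈ range N, h i := norm_sum_le_of_le _ fun i _ ↦ hfg i
    _ ≤ ∑' i, h i := hh.sum_le_tsum _ fun i _ ↦ (norm_nonneg _).trans (hfg i)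

/-- `|ζ_{±n}(κ)| = zetaAbs (2π/d) k (±κ) n` for `n ≥ 1`, with the lattice index `n` relaxed to
a real variable `s`. -/
noncomputable def zetaAbs (c k κ s : ℝ) : ℝ := √((κ + c * s) ^ 2 - k ^ 2)

section zetaAbs

variable {c k γ κ κ' s : ℝ}

theorem sq_mul_le_sq_add_mul_sub_sq (hk : 0 ≤ k) (hγ : 0 ≤ γ) (hγc : 2 * γ + k ≤ c)
    (hκ : |κ| ≤ γ) (hs : 1 ≤ s) : (γ * s) ^ 2 ≤ (κ + c * s) ^ 2 - k ^ 2 := by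
  obtain ⟨hκl, hκu⟩ := abs_le.mp hκ
  have hγs : 0 ≤ γ * s := by positivity
  have hminus : γ * s ≤ κ + c * s - k := by nlinarith
  have hplus : γ * s ≤ κ + c * s + k := by nlinarith
  nlinarith [mul_le_mul hminus hplus hγs (hγs.trans hminus)]

theorem mul_le_zetaAbs (hk : 0 ≤ k) (hγ : 0 ≤ γ) (hγc : 2 * γ + k ≤ c) (hκ : |κ| ≤ γ)
    (hs : 1 ≤ s) : γ * s ≤ zetaAbs c k κ s :=
  Real.le_sqrt_of_sq_le (sq_mul_le_sq_add_mul_sub_sq hk hγ hγc hκ hs)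

theorem sq_zetaAbs (hk : 0 ≤ k) (hγ : 0 ≤ γ) (hγc : 2 * γ + k ≤ c) (hκ : |κ| ≤ γ)
    (hs : 1 ≤ s) : zetaAbs c k κ s ^ 2 = (κ + c * s) ^ 2 - k ^ 2 :=
  Real.sq_sqrt ((sq_nonneg _).trans (sq_mul_le_sq_add_mul_sub_sq hk hγ hγc hκ hs))

theorem abs_inv_sub_inv_le_of_le {t a b : ℝ} (ht : 0 < t) (ha : t ≤ a) (hb : t ≤ b) :
    |a⁻¹ - b⁻¹| ≤ |a ^ 2 - b ^ 2| / (2 * t ^ 3) := by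
  have ha0 : 0 < a := ht.trans_le ha
  have hb0 : 0 < b := ht.trans_le hb
  have hfactor : a⁻¹ - b⁻¹ = (b ^ 2 - a ^ 2) / (a * b * (a + b)) := by
    field_simp
    ring
  rw [hfactor, abs_div, abs_sub_comm, abs_of_pos (by positivity : 0 < a * b * (a + b))]
  refine div_le_div_of_nonneg_left (abs_nonneg _) (by positivity) ?_
  nlinarith [mul_le_mul ha hb ht.le ha0.le]

theorem abs_inv_zetaAbs_sub_inv_zetaAbs_le (hk : 0 ≤ k) (hγ : 0 < γ) (hγc : 2 * γ + k ≤ c)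
    (hκ : |κ| ≤ γ) (hκ' : |κ'| ≤ γ) (hs : 1 ≤ s) :
    |(zetaAbs c k κ s)⁻¹ - (zetaAbs c k κ' s)⁻¹| ≤ 3 * c / (2 * γ ^ 3) * |κ - κ'| / s ^ 2 := by
  have hs0 : 0 < s := one_pos.trans_le hs
  have hdiff : |zetaAbs c k κ s ^ 2 - zetaAbs c k κ' s ^ 2| ≤ 3 * c * s * |κ - κ'| := by
    rw [sq_zetaAbs hk hγ.le hγc hκ hs, sq_zetaAbs hk hγ.le hγc hκ' hs,
      show (κ + c * s) ^ 2 - k ^ 2 - ((κ' + c * s) ^ 2 - k ^ 2)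
        = (κ - κ') * (κ + κ' + 2 * c * s) by ring, abs_mul, mul_comm]
    gcongr
    have hcs : 0 ≤ 2 * c * s := by nlinarith [abs_nonneg κ]
    calc |κ + κ' + 2 * c * s| ≤ |κ| + |κ'| + 2 * c * s :=
          (abs_add_le _ _).trans (by rw [abs_of_nonneg hcs]; gcongr; exact abs_add_le _ _)
      _ ≤ 3 * c * s := by nlinarith
  calc |(zetaAbs c k κ s)⁻¹ - (zetaAbs c k κ' s)⁻¹|
      ≤ |zetaAbs c k κ s ^ 2 - zetaAbs c k κ' s ^ 2| / (2 * (γ * s) ^ 3) :=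
        abs_inv_sub_inv_le_of_le (by positivity) (mul_le_zetaAbs hk hγ.le hγc hκ hs)
          (mul_le_zetaAbs hk hγ.le hγc hκ' hs)
    _ ≤ 3 * c * s * |κ - κ'| / (2 * (γ * s) ^ 3) := by gcongr
    _ = 3 * c / (2 * γ ^ 3) * |κ - κ'| / s ^ 2 := by field_simp

theorem antitone_inv_zetaAbs (hk : 0 ≤ k) (hγ : 0 < γ) (hγc : 2 * γ + k ≤ c) (hκ : |κ| ≤ γ) :
    Antitone fun m : ℕ ↦ (zetaAbs c k κ (m + 1))⁻¹ := by
  intro m m' hmm'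
  have hm : (1 : ℝ) ≤ m + 1 := by simp
  have hmm'' : (m : ℝ) + 1 ≤ m' + 1 := by simpa using hmm'
  refine inv_anti₀ ((mul_pos hγ (one_pos.trans_le hm)).trans_le
    (mul_le_zetaAbs hk hγ.le hγc hκ hm)) (Real.sqrt_le_sqrt ?_)
  have hκl := (abs_le.mp hκ).1
  have hc : 0 ≤ c := by linarith
  gcongr
  nlinarith

theorem tendsto_inv_zetaAbs (hk : 0 ≤ k) (hγ : 0 < γ) (hγc : 2 * γ + k ≤ c) (hκ : |κ| ≤ γ) :
    Tendsto (fun m : ℕ ↦ (zetaAbs c k κ (m + 1))⁻¹) atTop (𝓝 0) := by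
  have hγinv : Tendsto (fun m : ℕ ↦ γ⁻¹ * (1 / ((m : ℝ) + 1))) atTop (𝓝 0) := by
    simpa using tendsto_one_div_add_atTop_nhds_zero_nat.const_mul γ⁻¹
  refine squeeze_zero (fun m ↦ inv_nonneg.mpr (Real.sqrt_nonneg _)) (fun m ↦ ?_) hγinv
  have hm : (1 : ℝ) ≤ m + 1 := by simp
  calc (zetaAbs c k κ (m + 1))⁻¹ ≤ (γ * (m + 1))⁻¹ :=
        inv_anti₀ (by positivity) (mul_le_zetaAbs hk hγ.le hγc hκ hm)
    _ = γ⁻¹ * (1 / ((m : ℝ) + 1)) := by rw [mul_inv, one_div]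

end zetaAbs

theorem hasSum_one_div_nat_add_one_sq :
    HasSum (fun m : ℕ ↦ 1 / ((m : ℝ) + 1) ^ 2) (π ^ 2 / 6) := by
  simpa using (hasSum_nat_add_iff' 1).mpr hasSum_zeta_two

/-- The terms `n = m + 1` and `n = -(m + 1)` of the lattice sum, up to the factor `-i e^{iκd₀}`;
here `w = e^{i (2π/d) d₀}`. -/
noncomputable def pairTerm (w : ℂ) (c k κ : ℝ) (m : ℕ) : ℂ :=
  w ^ (m + 1) * (((zetaAbs c k κ (m + 1))⁻¹ : ℝ) : ℂ)
    + w⁻¹ ^ (m + 1) * (((zetaAbs c k (-κ) (m + 1))⁻¹ : ℝ) : ℂ)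

section pairTerm

variable {w : ℂ} {c k γ κ κ' : ℝ}

theorem exists_tendsto_sum_pairTerm (hw : ‖w‖ = 1) (hw1 : w ≠ 1) (hk : 0 ≤ k) (hγ : 0 < γ)
    (hγc : 2 * γ + k ≤ c) (hκ : |κ| ≤ γ) :
    ∃ P, Tendsto (fun N ↦ ∑ m ∈ range N, pairTerm w c k κ m) atTop (𝓝 P) := by
  have hκ' : |-κ| ≤ γ := (abs_neg κ).trans_le hκ
  obtain ⟨P₁, hP₁⟩ := exists_tendsto_sum_pow_succ_mul hw hw1
    (antitone_inv_zetaAbs hk hγ hγc hκ) (tendsto_inv_zetaAbs hk hγ hγc hκ)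
  obtain ⟨P₂, hP₂⟩ := exists_tendsto_sum_pow_succ_mul (by rw [norm_inv, hw, inv_one])
    (inv_ne_one.mpr hw1) (antitone_inv_zetaAbs hk hγ hγc hκ') (tendsto_inv_zetaAbs hk hγ hγc hκ')
  exact ⟨P₁ + P₂, by simpa only [pairTerm, sum_add_distrib] using hP₁.add hP₂⟩

theorem norm_pairTerm_sub_le (hw : ‖w‖ = 1) (hk : 0 ≤ k) (hγ : 0 < γ) (hγc : 2 * γ + k ≤ c)
    (hκ : |κ| ≤ γ) (hκ' : |κ'| ≤ γ) (m : ℕ) :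
    ‖pairTerm w c k κ m - pairTerm w c k κ' m‖ ≤ 3 * c / γ ^ 3 * |κ - κ'| / ((m : ℝ) + 1) ^ 2 := by
  have hm : (1 : ℝ) ≤ m + 1 := by simp
  have hw' : ‖w⁻¹‖ = 1 := by rw [norm_inv, hw, inv_one]
  have h₁ := abs_inv_zetaAbs_sub_inv_zetaAbs_le hk hγ hγc hκ hκ' hm
  have h₂ := abs_inv_zetaAbs_sub_inv_zetaAbs_le hk hγ hγc
    ((abs_neg κ).trans_le hκ) ((abs_neg κ').trans_le hκ') hm
  rw [neg_sub_neg, abs_sub_comm κ' κ] at h₂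
  have hsplit : pairTerm w c k κ m - pairTerm w c k κ' m
      = w ^ (m + 1) * (((zetaAbs c k κ (m + 1))⁻¹ - (zetaAbs c k κ' (m + 1))⁻¹ : ℝ) : ℂ)
        + w⁻¹ ^ (m + 1)
          * (((zetaAbs c k (-κ) (m + 1))⁻¹ - (zetaAbs c k (-κ') (m + 1))⁻¹ : ℝ) : ℂ) := by
    simp only [pairTerm]
    push_cast
    ring
  rw [hsplit]
  refine (norm_add_le _ _).trans ?_
  rw [norm_mul, norm_mul, norm_pow, norm_pow, hw, hw', one_pow, one_mul, one_mul,
    Complex.norm_real, Complex.norm_real, Real.norm_eq_abs, Real.norm_eq_abs]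
  exact (add_le_add h₁ h₂).trans_eq (by ring)

theorem exists_tendsto_sum_pairTerm_lipschitz (hw : ‖w‖ = 1) (hw1 : w ≠ 1) (hk : 0 ≤ k)
    (hγ : 0 < γ) (hγc : 2 * γ + k ≤ c) :
    ∃ P : ℝ → ℂ, (∀ κ, |κ| ≤ γ → Tendsto (fun N ↦ ∑ m ∈ range N, pairTerm w c k κ m) atTop
        (𝓝 (P κ))) ∧
      ∀ κ κ', |κ| ≤ γ → |κ'| ≤ γ → ‖P κ - P κ'‖ ≤ π ^ 2 * c / (2 * γ ^ 3) * |κ - κ'| := by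
  set P := fun κ ↦ limUnder atTop fun N ↦ ∑ m ∈ range N, pairTerm w c k κ m
  have hP : ∀ κ, |κ| ≤ γ → Tendsto (fun N ↦ ∑ m ∈ range N, pairTerm w c k κ m) atTop (𝓝 (P κ)) :=
    fun κ hκ ↦ tendsto_nhds_limUnder (exists_tendsto_sum_pairTerm hw hw1 hk hγ hγc hκ)
  refine ⟨P, hP, fun κ κ' hκ hκ' ↦ ?_⟩
  have hsum := hasSum_one_div_nat_add_one_sq.mul_left (3 * c / γ ^ 3 * |κ - κ'|)
  calc ‖P κ - P κ'‖ ≤ ∑' m : ℕ, 3 * c / γ ^ 3 * |κ - κ'| * (1 / ((m : ℝ) + 1) ^ 2) :=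
        norm_sub_le_tsum_of_tendsto_sum (hP κ hκ) (hP κ' hκ')
          (fun m ↦ (norm_pairTerm_sub_le hw hk hγ hγc hκ hκ' m).trans_eq (by ring))
          hsum.summable
    _ = π ^ 2 * c / (2 * γ ^ 3) * |κ - κ'| := by rw [hsum.tsum_eq]; ring
end pairTerm

section latticeSum

variable (d d₀ k κ : ℝ)

theorem kapN_neg (n : ℤ) : kapN d (-κ) (-n) = -kapN d κ n := by
  simp only [kapN, Int.cast_neg]
  ring

theorem zetaN_neg (n : ℤ) : zetaN d k (-κ) (-n) = zetaN d k κ n := by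
  simp only [zetaN, neg_eq_zero, kapN_neg, neg_sq]

theorem zetaN_zero_neg : zetaN d k (-κ) 0 = zetaN d k κ 0 := by
  simp only [zetaN, if_pos, neg_sq]

theorem zetaN_natCast_add_one (m : ℕ) :
    zetaN d k κ (m + 1) = I * zetaAbs (2 * π / d) k κ (m + 1) := by
  simp only [zetaN, kapN, zetaAbs, if_neg (by omega : (m : ℤ) + 1 ≠ 0)]
  push_cast
  ring_nf

theorem zetaN_neg_natCast_add_one (m : ℕ) :
    zetaN d k κ (-(m + 1)) = I * zetaAbs (2 * π / d) k (-κ) (m + 1) := by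
  rw [← zetaN_neg, neg_neg, zetaN_natCast_add_one]

theorem exp_I_mul_kapN (n : ℤ) :
    cexp (I * ((kapN d κ n * d₀ : ℝ) : ℂ))
      = cexp (I * ((κ * d₀ : ℝ) : ℂ)) * cexp (I * ((2 * π / d * d₀ : ℝ) : ℂ)) ^ n := by
  rw [← Complex.exp_int_mul, ← Complex.exp_add, kapN]
  push_cast
  ring_nf

theorem sum_Icc_exp_div_zetaN (N : ℕ) :
    ∑ n ∈ Icc (-(N : ℤ)) N, cexp (I * ((kapN d κ n * d₀ : ℝ) : ℂ)) / zetaN d k κ n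
      = cexp (I * ((κ * d₀ : ℝ) : ℂ)) * ((zetaN d k κ 0)⁻¹
        - I * ∑ m ∈ range N,
          pairTerm (cexp (I * ((2 * π / d * d₀ : ℝ) : ℂ))) (2 * π / d) k κ m) := by
  rw [sum_Icc_neg_eq_add_sum_range, mul_sub, mul_sum, mul_sum, sub_eq_add_neg, ← sum_neg_distrib]
  congr 1
  · rw [exp_I_mul_kapN, zpow_zero, mul_one, div_eq_mul_inv]
  · refine sum_congr rfl fun m _ ↦ ?_
    have hm : ((m : ℤ) + 1) = ((m + 1 : ℕ) : ℤ) := by push_cast; rfl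
    rw [exp_I_mul_kapN, exp_I_mul_kapN, zetaN_natCast_add_one, zetaN_neg_natCast_add_one, hm,
      zpow_neg, zpow_natCast, pairTerm, ← inv_pow]
    simp only [div_eq_mul_inv, mul_inv, inv_I]
    push_cast
    ring

theorem sum_Icc_exp_neg_div_zetaN (N : ℕ) :
    ∑ n ∈ Icc (-(N : ℤ)) N, cexp (-(I * ((kapN d κ n * d₀ : ℝ) : ℂ))) / zetaN d k κ n
      = ∑ n ∈ Icc (-(N : ℤ)) N, cexp (I * ((kapN d (-κ) n * d₀ : ℝ) : ℂ)) / zetaN d k (-κ) n := by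
  rw [← sum_Icc_comp_neg (fun n ↦ cexp (I * ((kapN d (-κ) n * d₀ : ℝ) : ℂ)) / zetaN d k (-κ) n)]
  refine sum_congr rfl fun n _ ↦ ?_
  rw [kapN_neg, zetaN_neg]
  push_cast
  ring_nf

end latticeSum

theorem exp_I_mul_ne_one {t : ℝ} (h0 : 0 < t) (h1 : t < 2 * π) : cexp (I * t) ≠ 1 := by
  intro h
  have hcos := congrArg re h
  rw [mul_comm, exp_ofReal_mul_I_re, one_re] at hcos
  exact h0.ne' ((Real.cos_eq_one_iff_of_lt_of_lt (by linarith) h1).mp hcos)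

theorem norm_exp_mul_sub_exp_neg_mul_le {d₀ : ℝ} (hd₀ : 0 ≤ d₀) (κ : ℝ) (z z' : ℂ) :
    ‖cexp (I * ((κ * d₀ : ℝ) : ℂ)) * z - cexp (I * ((-κ * d₀ : ℝ) : ℂ)) * z'‖
      ≤ 2 * d₀ * |κ| * ‖z‖ + ‖z - z'‖ := by
  set E' := cexp (I * ((-κ * d₀ : ℝ) : ℂ))
  have hE : cexp (I * ((κ * d₀ : ℝ) : ℂ)) = E' * cexp (I * ((2 * κ * d₀ : ℝ) : ℂ)) := by
    rw [← Complex.exp_add]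
    push_cast
    ring_nf
  have hE' : ‖E'‖ = 1 := norm_exp_I_mul_ofReal _
  have hshift : ‖cexp (I * ((2 * κ * d₀ : ℝ) : ℂ)) - 1‖ ≤ 2 * d₀ * |κ| := by
    refine norm_exp_I_mul_ofReal_sub_one_le.trans_eq ?_
    rw [Real.norm_eq_abs, abs_mul, abs_mul, abs_two, abs_of_nonneg hd₀]
    ring
  calc ‖cexp (I * ((κ * d₀ : ℝ) : ℂ)) * z - E' * z'‖
      = ‖E' * ((cexp (I * ((2 * κ * d₀ : ℝ) : ℂ)) - 1) * z + (z - z'))‖ := by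
        rw [hE]
        ring_nf
    _ ≤ 2 * d₀ * |κ| * ‖z‖ + ‖z - z'‖ := by
        rw [norm_mul, hE', one_mul]
        refine (norm_add_le _ _).trans ?_
        rw [norm_mul]
        gcongr

theorem norm_inv_zetaN_zero_le {d k κ : ℝ} (hk : 0 < k) (hκ : |κ| ≤ k / 2) :
    ‖(zetaN d k κ 0)⁻¹‖ ≤ 2 / k := by
  have hsq : (k / 2) ^ 2 ≤ k ^ 2 - κ ^ 2 := by
    have hκsq := sq_le_sq' (abs_le.mp hκ).1 (abs_le.mp hκ).2
    nlinarith
  rw [zetaN, if_pos rfl, norm_inv, Complex.norm_real, Real.norm_eq_abs,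
    abs_of_nonneg (Real.sqrt_nonneg _), ← one_div_div k 2, ← one_div]
  exact one_div_le_one_div_of_le (by positivity) (Real.le_sqrt_of_sq_le hsq)

theorem mem_D1 {d k κ : ℝ} (hd : 0 < d) (hk : 0 < k) (hkc : k < 2 * π / d)
    (hκ : |κ| ≤ (2 * π / d - k) / 2) : (κ, k) ∈ D1 d := by
  refine ⟨by linarith [show π / d = 2 * π / d / 2 by ring], hk, fun n hn ↦ ?_⟩
  have hn1 : (1 : ℝ) ≤ |(n : ℝ)| := by exact_mod_cast Int.one_le_abs hn
  have hlattice : |2 * π * n / d| = 2 * π / d * |(n : ℝ)| := by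
    rw [mul_div_right_comm, abs_mul, abs_of_pos (by positivity : 0 < 2 * π / d)]
  have htriangle := abs_sub_abs_le_abs_sub (2 * π * n / d) (-κ)
  rw [abs_neg, sub_neg_eq_add, add_comm] at htriangle
  nlinarith

theorem tendsto_sum_Icc_exp_div_zetaN (d d₀ k κ : ℝ) {P : ℂ}
    (hP : Tendsto (fun N ↦ ∑ m ∈ range N,
      pairTerm (cexp (I * ((2 * π / d * d₀ : ℝ) : ℂ))) (2 * π / d) k κ m) atTop (𝓝 P)) :
    Tendsto (fun N : ℕ ↦ ∑ n ∈ Icc (-(N : ℤ)) N,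
        cexp (I * ((kapN d κ n * d₀ : ℝ) : ℂ)) / zetaN d k κ n) atTop
      (𝓝 (cexp (I * ((κ * d₀ : ℝ) : ℂ)) * ((zetaN d k κ 0)⁻¹ - I * P))) := by
  simp_rw [sum_Icc_exp_div_zetaN]
  exact (tendsto_const_nhds.sub (hP.const_mul I)).const_mul _

theorem exists_tendsto_sum_Icc_exp_div_zetaN {d d₀ k : ℝ} (hd : 0 < d) (hd₀ : 0 < d₀)
    (hd₀' : d₀ < d) (hk0 : 0 < k) (hk1 : k < 2 * π / d) :
    ∃ δ > 0, ∃ H : ℝ → ℂ, ∃ M > 0, ∃ L > 0, ∀ κ : ℝ, |κ| ≤ δ →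
      (κ, k) ∈ D1 d ∧
      Tendsto (fun N : ℕ ↦ ∑ n ∈ Icc (-(N : ℤ)) N,
          cexp (I * ((kapN d κ n * d₀ : ℝ) : ℂ)) / zetaN d k κ n) atTop
        (𝓝 (cexp (I * ((κ * d₀ : ℝ) : ℂ)) * H κ)) ∧
      ‖H κ‖ ≤ M ∧ ‖H κ - H (-κ)‖ ≤ L * |κ| := by
  set γ := (2 * π / d - k) / 2
  have hγ : 0 < γ := half_pos (sub_pos.mpr hk1)
  have hcd₀ : 2 * π / d * d₀ < 2 * π := by
    rw [div_mul_eq_mul_div, div_lt_iff₀ hd]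
    nlinarith [pi_pos]
  obtain ⟨P, hP, hPL⟩ := exists_tendsto_sum_pairTerm_lipschitz (c := 2 * π / d)
    (norm_exp_I_mul_ofReal _) (exp_I_mul_ne_one (by positivity) hcd₀) hk0.le hγ
    (by simp only [γ]; linarith)
  set L := π ^ 2 * (2 * π / d) / (2 * γ ^ 3)
  refine ⟨min (k / 2) γ, by positivity, fun κ ↦ (zetaN d k κ 0)⁻¹ - I * P κ,
    2 / k + ‖P 0‖ + L * γ, by positivity, 2 * L, by positivity, fun κ hκ ↦ ?_⟩
  have hκk : |κ| ≤ k / 2 := hκ.trans (min_le_left _ _)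
  have hκγ : |κ| ≤ γ := hκ.trans (min_le_right _ _)
  refine ⟨mem_D1 hd hk0 hk1 hκγ, tendsto_sum_Icc_exp_div_zetaN d d₀ k κ (hP κ hκγ), ?_, ?_⟩
  · have hP0 := hPL κ 0 hκγ (by simpa using hγ.le)
    rw [sub_zero] at hP0
    have hLγ : L * |κ| ≤ L * γ := by gcongr
    refine (norm_sub_le _ _).trans ?_
    rw [norm_mul, Complex.norm_I, one_mul]
    linarith [norm_inv_zetaN_zero_le (d := d) hk0 hκk, norm_le_norm_add_norm_sub' (P κ) (P 0)]
  · simp only [zetaN_zero_neg, sub_sub_sub_cancel_left, ← mul_sub, norm_mul, Complex.norm_I,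
      one_mul, norm_sub_rev (P (-κ))]
    refine (hPL κ (-κ) hκγ ((abs_neg κ).trans_le hκγ)).trans_eq ?_
    rw [sub_neg_eq_add, ← two_mul, abs_mul, abs_two]
    ring

/-- Fix `d > 0`, `d₀ ∈ (0,d)` and `k ∈ (0, 2π/d)`. There are
`δ, C > 0` such that for every `|κ| ≤ δ` (so `(κ,k) ∈ D₁`), the symmetric partial
sums `-(i/d) Σ_{n=-N}^N e^{±iκ_n d₀}/ζ_n` converge to limits `b⁺(κ)`, `b⁻(κ)` and
`|b⁺(κ) − b⁻(κ)| ≤ C|κ|`. -/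
theorem stmt_12 (d d₀ k : ℝ) (hd : 0 < d) (hd₀ : 0 < d₀) (hd₀' : d₀ < d)
    (hk0 : 0 < k) (hk1 : k < 2 * π / d) :
    ∃ δ > 0, ∃ C > 0, ∀ κ : ℝ, |κ| ≤ δ →
      (κ, k) ∈ D1 d ∧
      ∃ bp bm : ℂ,
        Tendsto (fun N : ℕ =>
            (-Complex.I / (d : ℂ)) * ∑ n ∈ Finset.Icc (-(N : ℤ)) (N : ℤ),
              Complex.exp (Complex.I * ((kapN d κ n * d₀ : ℝ) : ℂ)) / zetaN d k κ n)
          atTop (nhds bp) ∧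
        Tendsto (fun N : ℕ =>
            (-Complex.I / (d : ℂ)) * ∑ n ∈ Finset.Icc (-(N : ℤ)) (N : ℤ),
              Complex.exp (-(Complex.I * ((kapN d κ n * d₀ : ℝ) : ℂ))) / zetaN d k κ n)
          atTop (nhds bm) ∧
        ‖bp - bm‖ ≤ C * |κ| := by
  obtain ⟨δ, hδ, H, M, hM, L, hL, hH⟩ :=
    exists_tendsto_sum_Icc_exp_div_zetaN hd hd₀ hd₀' hk0 hk1
  refine ⟨δ, hδ, (2 * d₀ * M + L) / d, by positivity, fun κ hκ ↦ ?_⟩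
  obtain ⟨hD1, hplus, hHκ, hHsub⟩ := hH κ hκ
  obtain ⟨-, hminus, -⟩ := hH (-κ) ((abs_neg κ).trans_le hκ)
  refine ⟨hD1, -I / d * (cexp (I * ((κ * d₀ : ℝ) : ℂ)) * H κ),
    -I / d * (cexp (I * ((-κ * d₀ : ℝ) : ℂ)) * H (-κ)), hplus.const_mul _, ?_, ?_⟩
  · simp_rw [sum_Icc_exp_neg_div_zetaN]
    exact hminus.const_mul _
  · rw [← mul_sub, norm_mul, norm_div, norm_neg, Complex.norm_I, Complex.norm_real,
      Real.norm_eq_abs, abs_of_pos hd, div_mul_eq_mul_div, one_mul, div_le_iff₀ hd]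
    calc _ ≤ 2 * d₀ * |κ| * ‖H κ‖ + ‖H κ - H (-κ)‖ :=
          norm_exp_mul_sub_exp_neg_mul_le hd₀.le κ _ _
      _ ≤ 2 * d₀ * |κ| * M + L * |κ| := by gcongr
      _ = _ := by field_simp
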